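/- Let b be a radial magnetic field on the open unit disc and let q be a trajectory of b with q(0) ≠ 0. Set H₀ = ½‖q̇(0)‖², p_θ = det(q(0), q̇(0)) + G(‖q(0)‖) and V(r) = (p_θ − G(r))²/(2r²). Then for every t in the domain of q with q(t) ≠ 0, writing r(t) = ‖q(t)‖, one has the reduced energy conservation ½ ṙ(t)² + V(r(t)) = H₀. -/

import Mathlib

/-!
Two conservation laws hold along a trajectory. The Lorentz force `-i b q̇` is orthogonal to `q̇`,
so the speed `‖q̇‖` is constant. Since `d/dt det(q, q̇) = det(q, q̈) = -b(q) ⟪q, q̇⟫` and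
`d/dt G(‖q‖) = ‖q‖ β(‖q‖) · d‖q‖/dt = β(‖q‖) ⟪q, q̇⟫`, the angular momentum
`det(q, q̇) + G(‖q‖)` is constant as well, hence equals `p_θ`. Wherever `q ≠ 0`, Lagrange's
identity `⟪q, q̇⟫² + det(q, q̇)² = ‖q‖² ‖q̇‖²` with `ṙ = ⟪q, q̇⟫ / ‖q‖` splits the kinetic energy
`‖q̇‖² / 2 = H₀` into `ṙ² / 2 + V(r)`.
-/

open Filter MeasureTheory Set

/-- The planar determinant `det(u,v) = u₁v₂ − u₂v₁`, for `ℝ²` identified with `ℂ`. -/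
noncomputable def det2 (u v : ℂ) : ℝ := u.re * v.im - u.im * v.re

open scoped InnerProductSpace

lemma Complex.real_inner_eq_re_mul_re_add_im_mul_im (u v : ℂ) :
    ⟪u, v⟫_ℝ = u.re * v.re + u.im * v.im := by
  simp only [Complex.inner, Complex.mul_re, Complex.conj_re, Complex.conj_im]; ring

lemma det2_eq_inner_I_mul (u v : ℂ) : det2 u v = ⟪Complex.I * u, v⟫_ℝ := by
  simp only [Complex.real_inner_eq_re_mul_re_add_im_mul_im, det2, Complex.mul_re, Complex.mul_im,
    Complex.I_re, Complex.I_im]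
  ring

lemma det2_self (u : ℂ) : det2 u u = 0 := by
  unfold det2; ring

lemma det2_neg_I_mul (c : ℝ) (u v : ℂ) : det2 u (-Complex.I * c * v) = -(c * ⟪u, v⟫_ℝ) := by
  simp only [Complex.real_inner_eq_re_mul_re_add_im_mul_im, det2, Complex.mul_re, Complex.mul_im,
    Complex.neg_re, Complex.neg_im, Complex.I_re, Complex.I_im, Complex.ofReal_re,
    Complex.ofReal_im]
  ring

lemma real_inner_neg_I_mul_self (c : ℝ) (v : ℂ) : ⟪v, -Complex.I * c * v⟫_ℝ = 0 := by
  simp only [Complex.real_inner_eq_re_mul_re_add_im_mul_im, Complex.mul_re, Complex.mul_im,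
    Complex.neg_re, Complex.neg_im, Complex.I_re, Complex.I_im, Complex.ofReal_re,
    Complex.ofReal_im]
  ring

lemma real_inner_sq_add_det2_sq (u v : ℂ) : ⟪u, v⟫_ℝ ^ 2 + det2 u v ^ 2 = ‖u‖ ^ 2 * ‖v‖ ^ 2 := by
  simp only [Complex.real_inner_eq_re_mul_re_add_im_mul_im, det2, ← Complex.normSq_eq_norm_sq,
    Complex.normSq_apply]
  ring

lemma sq_inner_div_norm_add_sq_det2_div_norm {u : ℂ} (hu : u ≠ 0) (v : ℂ) :
    (⟪u, v⟫_ℝ / ‖u‖) ^ 2 + (det2 u v / ‖u‖) ^ 2 = ‖v‖ ^ 2 := by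
  have hLagrange := real_inner_sq_add_det2_sq u v
  field_simp
  linear_combination hLagrange

theorem HasDerivAt.det2 {f g : ℝ → ℂ} {f' g' : ℂ} {t : ℝ} (hf : HasDerivAt f f' t)
    (hg : HasDerivAt g g' t) :
    HasDerivAt (fun s => det2 (f s) (g s)) (det2 (f t) g' + det2 f' (g t)) t := by
  simpa only [det2_eq_inner_I_mul] using (hf.const_mul Complex.I).inner ℝ hg

theorem HasDerivAt.norm {E : Type*} [NormedAddCommGroup E] [InnerProductSpace ℝ E]
    {f : ℝ → E} {f' : E} {t : ℝ} (hf : HasDerivAt f f' t) (h0 : f t ≠ 0) :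
    HasDerivAt (fun s => ‖f s‖) (⟪f t, f'⟫_ℝ / ‖f t‖) t := by
  have h := hf.norm_sq.sqrt (by positivity)
  simp only [Real.sqrt_sq (norm_nonneg _)] at h
  convert h using 1
  field_simp

theorem Set.OrdConnected.eq_of_hasDerivAt_eq_zero {E : Type*} [NormedAddCommGroup E]
    [NormedSpace ℝ E] {f : ℝ → E} {s : Set ℝ} (hs : s.OrdConnected)
    (hf : ∀ t ∈ s, HasDerivAt f 0 t) {x y : ℝ} (hx : x ∈ s) (hy : y ∈ s) : f x = f y := by
  have h := hs.convex.norm_image_sub_le_of_norm_hasDerivWithin_le (C := 0)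
    (fun t ht => (hf t ht).hasDerivWithinAt) (by simp) hy hx
  rwa [zero_mul, norm_le_zero_iff, sub_eq_zero] at h

/-- `G r = fluxPotential β (r ^ 2)` for `r ≥ 0`. Unlike `G ‖q t‖`, `fluxPotential β (‖q t‖ ^ 2)` is
differentiable in `t` also where the trajectory passes through the origin. -/
noncomputable def fluxPotential (β : ℝ → ℝ) (y : ℝ) : ℝ := ∫ u in (0:ℝ)..y, β √u / 2

lemma fluxPotential_sq {β : ℝ → ℝ} {r : ℝ} (hr : 0 ≤ r) (hβ : ContinuousOn β (Icc 0 r)) :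
    fluxPotential β (r ^ 2) = ∫ τ in (0:ℝ)..r, τ * β τ := by
  have hsqrt : ContinuousOn (fun u => β √u / 2) ((· ^ 2) '' uIcc 0 r) := by
    refine (hβ.comp Real.continuous_sqrt.continuousOn ?_).div_const 2
    rintro _ ⟨x, hx, rfl⟩
    rw [uIcc_of_le hr] at hx
    simpa only [mem_preimage, Real.sqrt_sq hx.1] using hx
  calc fluxPotential β (r ^ 2) = ∫ u in (0:ℝ) ^ 2..r ^ 2, β √u / 2 := by
        rw [fluxPotential, zero_pow two_ne_zero]
    _ = ∫ x in (0:ℝ)..r, ((fun u => β √u / 2) ∘ (· ^ 2)) x * (2 * x) :=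
        (intervalIntegral.integral_comp_mul_deriv' (fun x _ => by simpa using hasDerivAt_pow 2 x)
          (by fun_prop) hsqrt).symm
    _ = ∫ τ in (0:ℝ)..r, τ * β τ := by
        refine intervalIntegral.integral_congr fun x hx => ?_
        rw [uIcc_of_le hr] at hx
        simp only [Function.comp, Real.sqrt_sq hx.1]
        ring

lemma hasDerivAt_fluxPotential {β : ℝ → ℝ} (hβ : ContinuousOn β (Ico 0 1)) {y : ℝ} (hy : y < 1) :
    HasDerivAt (fluxPotential β) (β √y / 2) y := by
  have hcont : ContinuousOn (fun u => β √u / 2) (Iio 1) :=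
    (hβ.comp Real.continuous_sqrt.continuousOn fun u hu =>
      ⟨Real.sqrt_nonneg u, (Real.sqrt_lt' one_pos).mpr (by simpa using hu)⟩).div_const 2
  have h0y : uIcc 0 y ⊆ Iio 1 := fun u hu => hu.2.trans_lt (sup_lt_iff.mpr ⟨one_pos, hy⟩)
  exact intervalIntegral.integral_hasDerivAt_right ((hcont.mono h0y).intervalIntegrable)
    (hcont.stronglyMeasurableAtFilter isOpen_Iio y hy) (hcont.continuousAt (Iio_mem_nhds hy))

section Trajectory

variable {s : Set ℝ} {q v : ℝ → ℂ}

theorem norm_eq_of_hasDerivAt_eq_neg_I_mul (hs : s.OrdConnected) {c : ℝ → ℝ}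
    (hv : ∀ t ∈ s, HasDerivAt v (-Complex.I * c t * v t) t) {t₁ t₂ : ℝ} (h₁ : t₁ ∈ s)
    (h₂ : t₂ ∈ s) :
    ‖v t₁‖ = ‖v t₂‖ := by
  have hE : ∀ t ∈ s, HasDerivAt (‖v ·‖ ^ 2) 0 t := fun t ht => by
    simpa only [real_inner_neg_I_mul_self, mul_zero] using (hv t ht).norm_sq
  exact (pow_left_inj₀ (norm_nonneg _) (norm_nonneg _) two_ne_zero).mp
    (hs.eq_of_hasDerivAt_eq_zero hE h₁ h₂)

theorem det2_add_fluxPotential_eq {β : ℝ → ℝ} (hβ : ContinuousOn β (Ico 0 1)) (hs : s.OrdConnected)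
    (hmem : ∀ t ∈ s, ‖q t‖ < 1) (hq : ∀ t ∈ s, HasDerivAt q (v t) t)
    (hv : ∀ t ∈ s, HasDerivAt v (-Complex.I * β ‖q t‖ * v t) t) {t₁ t₂ : ℝ} (h₁ : t₁ ∈ s)
    (h₂ : t₂ ∈ s) :
    det2 (q t₁) (v t₁) + fluxPotential β (‖q t₁‖ ^ 2) =
      det2 (q t₂) (v t₂) + fluxPotential β (‖q t₂‖ ^ 2) := by
  refine hs.eq_of_hasDerivAt_eq_zero
    (f := fun t => det2 (q t) (v t) + fluxPotential β (‖q t‖ ^ 2)) (fun t ht => ?_) h₁ h₂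
  have hsq : ‖q t‖ ^ 2 < 1 := by nlinarith [hmem t ht, norm_nonneg (q t)]
  have hΦ := (hasDerivAt_fluxPotential hβ hsq).comp t (hq t ht).norm_sq
  refine (((hq t ht).det2 (hv t ht)).add hΦ).congr_deriv ?_
  rw [Real.sqrt_sq (norm_nonneg _), det2_neg_I_mul, det2_self]
  ring

end Trajectory

theorem reduced_energy_conservation_general
    (β : ℝ → ℝ)
    (hβ : ∀ x ∈ Set.Ico (0:ℝ) 1, ∃ K : NNReal,
      ∃ u ∈ nhdsWithin x (Set.Ico (0:ℝ) 1), LipschitzOnWith K β u)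
    (G : ℝ → ℝ) (hG : ∀ r, G r = ∫ τ in (0:ℝ)..r, τ * β τ)
    (I : Set ℝ) (hI : I.OrdConnected) (h0I : (0:ℝ) ∈ I)
    (q : ℝ → ℂ) (hq : ContDiff ℝ 2 q)
    (hmem : ∀ t ∈ I, ‖q t‖ < 1)
    (hNewton : ∀ t ∈ I, deriv (deriv q) t = -Complex.I * (β ‖q t‖ : ℂ) * deriv q t)
    (H₀ pθ : ℝ) (hH0 : H₀ = ‖deriv q 0‖ ^ 2 / 2)
    (hpθ : pθ = det2 (q 0) (deriv q 0) + G ‖q 0‖)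
    (V : ℝ → ℝ) (hV : ∀ r, V r = (pθ - G r) ^ 2 / (2 * r ^ 2)) :
    ∀ t ∈ I, q t ≠ 0 →
      (deriv (fun τ => ‖q τ‖) t) ^ 2 / 2 + V ‖q t‖ = H₀ := by
  intro t ht hqt
  have hβc : ContinuousOn β (Ico 0 1) := LocallyLipschitzOn.continuousOn fun x hx => hβ x hx
  have hq' : ∀ s ∈ I, HasDerivAt q (deriv q s) s := fun s _ =>
    (hq.differentiable two_ne_zero s).hasDerivAt
  have hv : ∀ s ∈ I, HasDerivAt (deriv q) (-Complex.I * β ‖q s‖ * deriv q s) s := fun s hs =>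
    hNewton s hs ▸ (hq.differentiable_deriv_two s).hasDerivAt
  have hG_eq : ∀ s ∈ I, G ‖q s‖ = fluxPotential β (‖q s‖ ^ 2) := fun s hs => by
    rw [hG, fluxPotential_sq (norm_nonneg _) (hβc.mono (Icc_subset_Ico_right (hmem s hs)))]
  have hspeed := norm_eq_of_hasDerivAt_eq_neg_I_mul hI hv ht h0I
  have hmomentum := det2_add_fluxPotential_eq hβc hI hmem hq' hv ht h0I
  have hangular : pθ - G ‖q t‖ = det2 (q t) (deriv q t) := by
    rw [hpθ, hG_eq 0 h0I, hG_eq t ht]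
    linarith
  rw [((hq' t ht).norm hqt).deriv, hV, hangular, hH0, ← hspeed,
    ← sq_inner_div_norm_add_sq_det2_div_norm hqt (deriv q t)]
  ring

/-- Let `b(q) = β(‖q‖)` be a radial magnetic field on the open unit disc
(`β` locally Lipschitz on `[0,1)`), `G(r) = ∫₀^r τβ(τ)dτ`, and let `q` be a trajectory
of `b` (a `C²` solution of `q̈ = −i·b(q)·q̇`) with `q(0) ≠ 0`. Set `H₀ = ½‖q̇(0)‖²`,
`p_θ = det(q(0),q̇(0)) + G(‖q(0)‖)` and `V(r) = (p_θ − G(r))²/(2r²)`. Then for every `t`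
in the domain with `q(t) ≠ 0`, writing `r(t) = ‖q(t)‖`, one has `½ṙ(t)² + V(r(t)) = H₀`. -/
theorem reduced_energy_conservation
    (β : ℝ → ℝ)
    (hβ : ∀ x ∈ Set.Ico (0:ℝ) 1, ∃ K : NNReal,
      ∃ u ∈ nhdsWithin x (Set.Ico (0:ℝ) 1), LipschitzOnWith K β u)
    (G : ℝ → ℝ) (hG : ∀ r, G r = ∫ τ in (0:ℝ)..r, τ * β τ)
    (I : Set ℝ) (hI : I.OrdConnected) (h0I : (0:ℝ) ∈ I)
    (q : ℝ → ℂ) (hq : ContDiff ℝ 2 q)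
    (hmem : ∀ t ∈ I, ‖q t‖ < 1)
    (hNewton : ∀ t ∈ I, deriv (deriv q) t = -Complex.I * (β ‖q t‖ : ℂ) * deriv q t)
    (h0 : q 0 ≠ 0)
    (H₀ pθ : ℝ) (hH0 : H₀ = ‖deriv q 0‖ ^ 2 / 2)
    (hpθ : pθ = det2 (q 0) (deriv q 0) + G ‖q 0‖)
    (V : ℝ → ℝ) (hV : ∀ r, V r = (pθ - G r) ^ 2 / (2 * r ^ 2)) :
    ∀ t ∈ I, q t ≠ 0 →
      (deriv (fun τ => ‖q τ‖) t) ^ 2 / 2 + V ‖q t‖ = H₀ :=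
  reduced_energy_conservation_general β hβ G hG I hI h0I q hq hmem hNewton H₀ pθ hH0 hpθ V hV
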